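/- Suppose K : {(t,s) : t > s} × ℝⁿ × ℝⁿ → ℝ satisfies the semigroup identity K(t,x,s,y) = ∫ K(t,x,r,z) K(r,z,s,y) dz for all s < r < t (with K nonnegative, or the bound applied to operator norms of matrix-valued K), and the short-time Gaussian bound K(t,x,s,y) ≤ C(π/κ)^{n/2} Φ((t−s)/(4κ), x−y) whenever 0 < t−s ≤ R_c². Then for all t > s, K(t,x,s,y) ≤ C (t−s)^{-n/2} exp(−κ|x−y|²/(t−s) + γ(t−s)/R_c²), where γ = log(C(π/κ)^{n/2}). -/

import Mathlib

/-!
Iterate the semigroup identity over `m + 1` equal time steps of length at most `R_c²` and bound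
each factor by the short-time estimate `K ≤ A Φ((t - s)/(4κ), x - y)`, `A = C (π/κ)^{n/2}`.
Since a product of two heat kernels is a heat kernel in `x - y` times a normalised Gaussian in the
intermediate point (completing the square), the Chapman–Kolmogorov identity collapses the iterated
integral to `A ^ (m + 1) Φ((t - s)/(4κ), x - y)`. Choosing `m` with `(t - s)/R_c² ≤ m + 1` and
`A ^ m ≤ A ^ ((t - s)/R_c²) = e^{γ (t - s)/R_c²}` (rounding down if `A ≥ 1`, up if `A < 1`) and
using `A (π/κ)^{-n/2} = C` gives the bound.
-/

open MeasureTheory Real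
open scoped RealInnerProductSpace

noncomputable section

variable (V : Type*) [NormedAddCommGroup V] [InnerProductSpace ℝ V]

def heatKernel (t : ℝ) (x : V) : ℝ :=
  (4 * π * t) ^ (-(Module.finrank ℝ V : ℝ) / 2) * exp (-‖x‖ ^ 2 / (4 * t))

variable {V}

theorem heatKernel_nonneg {t : ℝ} (ht : 0 ≤ t) (x : V) : 0 ≤ heatKernel V t x := by
  unfold heatKernel; positivity

theorem heatKernel_mul_heatKernel {t r : ℝ} (ht : 0 < t) (hr : 0 < r) (x y z : V) :
    heatKernel V t (x - z) * heatKernel V r (z - y) =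
      heatKernel V (t + r) (x - y) *
        heatKernel V (t * r / (t + r)) (z - (t + r)⁻¹ • (r • x + t • y)) := by
  have htr : 0 < t + r := by positivity
  set p := z - x
  set q := z - y
  have hxz : ‖x - z‖ = ‖p‖ := norm_sub_rev x z
  have hxy : ‖x - y‖ ^ 2 = ‖p‖ ^ 2 - 2 * ⟪p, q⟫ + ‖q‖ ^ 2 := by
    rw [← norm_sub_sq_real, norm_sub_rev, sub_sub_sub_cancel_left]
  have hzw : ‖z - (t + r)⁻¹ • (r • x + t • y)‖ ^ 2 =
      ((t + r) ^ 2)⁻¹ * (r ^ 2 * ‖p‖ ^ 2 + 2 * (r * t) * ⟪p, q⟫ + t ^ 2 * ‖q‖ ^ 2) := by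
    have hz : z = (t + r)⁻¹ • ((t + r) • z) := by
      rw [smul_smul, inv_mul_cancel₀ htr.ne', one_smul]
    have hshift : z - (t + r)⁻¹ • (r • x + t • y) = (t + r)⁻¹ • (r • p + t • q) := by
      conv_lhs => rw [hz]
      rw [← smul_sub]; congr 1; module
    rw [hshift, norm_smul, mul_pow, norm_add_sq_real, norm_smul, norm_smul, real_inner_smul_left,
      real_inner_smul_right, norm_inv, Real.norm_of_nonneg htr.le, Real.norm_of_nonneg hr.le,
      Real.norm_of_nonneg ht.le, inv_pow]
    ring
  unfold heatKernel
  rw [mul_mul_mul_comm, mul_mul_mul_comm _ (exp _), ← exp_add, ← exp_add,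
    ← mul_rpow (by positivity) (by positivity), ← mul_rpow (by positivity) (by positivity),
    hxz, hxy, hzw]
  congr 2
  · field_simp
  · field_simp
    ring

theorem rpow_mul_heatKernel_div {κ τ : ℝ} (hκ : 0 < κ) (hτ : 0 < τ) (x : V) :
    (π / κ) ^ ((Module.finrank ℝ V : ℝ) / 2) * heatKernel V (τ / (4 * κ)) x =
      τ ^ (-(Module.finrank ℝ V : ℝ) / 2) * exp (-κ * ‖x‖ ^ 2 / τ) := by
  unfold heatKernel
  rw [show 4 * π * (τ / (4 * κ)) = π / κ * τ by field_simp,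
    show -‖x‖ ^ 2 / (4 * (τ / (4 * κ))) = -κ * ‖x‖ ^ 2 / τ by field_simp,
    mul_rpow (by positivity) hτ.le, neg_div, rpow_neg (by positivity), ← mul_assoc, ← mul_assoc,
    mul_inv_cancel₀ (by positivity), one_mul]

variable [FiniteDimensional ℝ V] [MeasurableSpace V] [BorelSpace V]

theorem integral_heatKernel {t : ℝ} (ht : 0 < t) : ∫ x, heatKernel V t x = 1 := by
  have hb : 0 < (4 * t)⁻¹ := by positivity
  calc ∫ x, heatKernel V t x
      = ∫ x : V,
          (4 * π * t) ^ (-(Module.finrank ℝ V : ℝ) / 2) * exp (-(4 * t)⁻¹ * ‖x‖ ^ 2) := by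
        congr 1 with x; unfold heatKernel; congr 2; ring
    _ = 1 := by
        rw [integral_const_mul, GaussianFourier.integral_rexp_neg_mul_sq_norm hb,
          div_inv_eq_mul, show π * (4 * t) = 4 * π * t by ring, neg_div,
          rpow_neg (by positivity), inv_mul_cancel₀ (by positivity)]

theorem integrable_heatKernel {t : ℝ} (ht : 0 < t) : Integrable (heatKernel V t) :=
  Integrable.of_integral_ne_zero (by rw [integral_heatKernel ht]; exact one_ne_zero)

theorem integrable_heatKernel_mul_heatKernel {t r : ℝ} (ht : 0 < t) (hr : 0 < r) (x y : V) :
    Integrable fun z ↦ heatKernel V t (x - z) * heatKernel V r (z - y) := by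
  simp_rw [heatKernel_mul_heatKernel ht hr]
  exact ((integrable_heatKernel (by positivity)).comp_sub_right _).const_mul _

theorem integral_heatKernel_mul_heatKernel {t r : ℝ} (ht : 0 < t) (hr : 0 < r) (x y : V) :
    ∫ z, heatKernel V t (x - z) * heatKernel V r (z - y) = heatKernel V (t + r) (x - y) := by
  simp_rw [heatKernel_mul_heatKernel ht hr]
  rw [integral_const_mul, integral_sub_right_eq_self (heatKernel V _),
    integral_heatKernel (by positivity), mul_one]

theorem le_pow_mul_heatKernel_of_semigroup {K : ℝ → V → ℝ → V → ℝ} {A D L : ℝ}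
    (hA : 0 ≤ A) (hD : 0 < D) (hK : ∀ t x s y, 0 ≤ K t x s y)
    (hsemi : ∀ s r t : ℝ, s < r → r < t → ∀ x y, K t x s y = ∫ z, K t x r z * K r z s y)
    (hshort : ∀ s t : ℝ, s < t → t - s ≤ L → ∀ x y,
      K t x s y ≤ A * heatKernel V ((t - s) / D) (x - y))
    (m : ℕ) {s t : ℝ} (hst : s < t) (hL : t - s ≤ (m + 1) * L) (x y : V) :
    K t x s y ≤ A ^ (m + 1) * heatKernel V ((t - s) / D) (x - y) := by
  induction m generalizing s t x y with
  | zero => simpa using hshort s t hst (by simpa using hL) x y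
  | succ m ih =>
    push_cast at hL
    set r := s + (t - s) / (m + 2)
    have hm : (0 : ℝ) < m + 2 := by positivity
    have hsr : 0 < r - s := by
      simp only [r, add_sub_cancel_left]; exact div_pos (by linarith) hm
    have hrs : r - s ≤ L := by
      simp only [r, add_sub_cancel_left]; rw [div_le_iff₀ hm]; linarith
    have hrt : t - r = (m + 1) * (r - s) := by simp only [r]; field_simp; ring
    have htr : 0 < t - r := by rw [hrt]; positivity
    have htrL : t - r ≤ (m + 1) * L := by rw [hrt]; gcongr
    calc K t x s y = ∫ z, K t x r z * K r z s y := hsemi s r t (by linarith) (by linarith) x y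
      _ ≤ ∫ z, A ^ (m + 1 + 1) *
            (heatKernel V ((t - r) / D) (x - z) * heatKernel V ((r - s) / D) (z - y)) := by
        refine integral_mono_of_nonneg (ae_of_all _ fun z ↦ mul_nonneg (hK ..) (hK ..))
          ((integrable_heatKernel_mul_heatKernel (by positivity) (by positivity) x y).const_mul _)
          (ae_of_all _ fun z ↦ ?_)
        calc K t x r z * K r z s y
            ≤ (A ^ (m + 1) * heatKernel V ((t - r) / D) (x - z)) *
                (A * heatKernel V ((r - s) / D) (z - y)) :=
              mul_le_mul (ih (by linarith) htrL x z) (hshort s r (by linarith) hrs z y) (hK ..)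
                (mul_nonneg (pow_nonneg hA _) (heatKernel_nonneg (by positivity) _))
          _ = _ := by ring
      _ = A ^ (m + 1 + 1) * heatKernel V ((t - s) / D) (x - y) := by
        rw [integral_const_mul, integral_heatKernel_mul_heatKernel (by positivity) (by positivity),
          ← add_div, sub_add_sub_cancel]

theorem exists_nat_pow_le_rpow {A u : ℝ} (hA : 0 < A) (hu : 0 ≤ u) :
    ∃ m : ℕ, u ≤ m + 1 ∧ A ^ m ≤ A ^ u := by
  rcases le_or_gt 1 A with hA1 | hA1
  · refine ⟨⌊u⌋₊, (Nat.lt_floor_add_one u).le, ?_⟩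
    rw [← rpow_natCast]
    exact rpow_le_rpow_of_exponent_le hA1 (Nat.floor_le hu)
  · refine ⟨⌈u⌉₊, (Nat.le_ceil u).trans (by linarith), ?_⟩
    rw [← rpow_natCast]
    exact rpow_le_rpow_of_exponent_ge hA hA1.le (Nat.le_ceil u)

end

theorem stmt_5 (n : ℕ) (C κ Rc : ℝ) (hC : 0 < C) (hκ : 0 < κ) (hRc : 0 < Rc)
    (K : ℝ → EuclideanSpace ℝ (Fin n) → ℝ → EuclideanSpace ℝ (Fin n) → ℝ)
    (hnn : ∀ t x s y, 0 ≤ K t x s y)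
    (hsemi : ∀ s r t : ℝ, s < r → r < t → ∀ x y,
      K t x s y = ∫ z, K t x r z * K r z s y)
    (hshort : ∀ s t : ℝ, s < t → t - s ≤ Rc ^ 2 → ∀ x y,
      K t x s y ≤ C * (Real.pi / κ) ^ ((n : ℝ) / 2) *
        ((4 * Real.pi * ((t - s) / (4 * κ))) ^ (-(n : ℝ) / 2) *
          Real.exp (-‖x - y‖ ^ 2 / (4 * ((t - s) / (4 * κ)))))) :
    ∀ s t : ℝ, s < t → ∀ x y,
      K t x s y ≤ C * (t - s) ^ (-(n : ℝ) / 2) *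
        Real.exp (-κ * ‖x - y‖ ^ 2 / (t - s)
          + Real.log (C * (Real.pi / κ) ^ ((n : ℝ) / 2)) * (t - s) / Rc ^ 2) := by
  intro s t hst x y
  set A := C * (π / κ) ^ ((n : ℝ) / 2)
  have hA : 0 < A := by positivity
  have hτ : 0 < t - s := sub_pos.2 hst
  obtain ⟨m, hmu, hAm⟩ := exists_nat_pow_le_rpow hA (div_nonneg hτ.le (sq_nonneg Rc))
  have hm : t - s ≤ (m + 1) * Rc ^ 2 := by rwa [div_le_iff₀ (by positivity)] at hmu
  have hbound := le_pow_mul_heatKernel_of_semigroup (D := 4 * κ) hA.le (by positivity) hnn hsemi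
    (fun s t hst hL x y ↦ by
      simpa only [heatKernel, finrank_euclideanSpace_fin] using hshort s t hst hL x y) m hst hm x y
  have hgauss := rpow_mul_heatKernel_div hκ hτ (x - y)
  rw [finrank_euclideanSpace_fin] at hgauss
  calc K t x s y
      ≤ A ^ m * (C * ((π / κ) ^ ((n : ℝ) / 2) * heatKernel _ ((t - s) / (4 * κ)) (x - y))) :=
        hbound.trans_eq (by ring)
    _ ≤ A ^ ((t - s) / Rc ^ 2) *
          (C * ((t - s) ^ (-(n : ℝ) / 2) * exp (-κ * ‖x - y‖ ^ 2 / (t - s)))) := by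
        rw [hgauss]; gcongr
    _ = _ := by rw [rpow_def_of_pos hA, ← mul_div_assoc, exp_add]; ring
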